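/- Topological properties of strictly monotone spacetime sets: Let N be a topological space, fix a closed set U ⊆ N and T₀ ∈ ℝ, and suppose Z ⊆ C_{U,T₀} is closed in N × ℝ and strictly monotone in C_{U,T₀}. Then: (1) Z ∩ (N × (T₀,∞)) = cl(int_{C_{U,T₀}}(Z)) ∩ (N × (T₀,∞)), where cl denotes closure in N × ℝ and int_{C_{U,T₀}} denotes interior in the subspace topology of C_{U,T₀}; (2) if V ⊆ U and Γ ⊆ Z are closed, Γ ⊆ C_{∂V,T₀} (∂V the topological boundary of V in N), and Γ is strictly monotone in C_{∂V,T₀}, then int_{C_{∂V,T₀}}(Γ) ∩ (N × (T₀,∞)) ⊆ int_{C_{U,T₀}}(Z). -/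
import Mathlib


open Set Filter Metric
open scoped RealInnerProductSpace Topology ENNReal NNReal MeasureTheory

noncomputable section

/-- Euclidean space `ℝ^{n+1}`. -/
abbrev Euc (n : ℕ) : Type := EuclideanSpace ℝ (Fin (n + 1))

/-- The time-`t` tslice of a spacetime set. -/
def tslice {α : Type*} (A : Set (α × ℝ)) (t : ℝ) : Set α := {x | (x, t) ∈ A}

/-- The spacetime cylinder `C_{U,T₀} = U × [T₀,∞)`. -/
def cyl {α : Type*} (U : Set α) (T₀ : ℝ) : Set (α × ℝ) := U ×ˢ Ici T₀

/-- Interior of `A` in the subspace topology of `S`, viewed in the ambient space. -/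
def interiorIn {α : Type*} [TopologicalSpace α] (S A : Set α) : Set α :=
  (Subtype.val : S → α) '' interior ((Subtype.val : S → α) ⁻¹' A)

/-- Boundary (frontier) of `A` in the subspace topology of `S`, viewed in the ambient space. -/
def frontierIn {α : Type*} [TopologicalSpace α] (S A : Set α) : Set α :=
  (Subtype.val : S → α) '' frontier ((Subtype.val : S → α) ⁻¹' A)

/-- Divergence of a vector field on `ℝ^{n+1}`. -/
def divVF {n : ℕ} (V : Euc n → Euc n) (x : Euc n) : ℝ :=
  ∑ i, ⟪fderiv ℝ V x (EuclideanSpace.single i 1), EuclideanSpace.single i 1⟫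

/-- Spatial gradient of a spacetime function. -/
def spatialGrad {n : ℕ} (f : Euc n × ℝ → ℝ) (x : Euc n) (t : ℝ) : Euc n :=
  gradient (fun y => f (y, t)) x

/-- Time derivative of a spacetime function. -/
def timeDeriv {n : ℕ} (f : Euc n × ℝ → ℝ) (x : Euc n) (t : ℝ) : ℝ :=
  deriv (fun s => f (x, s)) t

/-- Outward unit normal `∇f/|∇f|`. -/
def unitNormal {n : ℕ} (f : Euc n × ℝ → ℝ) (x : Euc n) (t : ℝ) : Euc n :=
  ‖spatialGrad f x t‖⁻¹ • spatialGrad f x t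

/-- Normal velocity `v_K = -(∂f/∂t)/|∇f|`. -/
def normalVel {n : ℕ} (f : Euc n × ℝ → ℝ) (x : Euc n) (t : ℝ) : ℝ :=
  -timeDeriv f x t / ‖spatialGrad f x t‖

/-- The scalar `X`-mean-curvature `H^X_K = -div(∇f/|∇f|) + X·n_K`. -/
def XMeanCurvature {n : ℕ} (X : Euc n → Euc n) (f : Euc n × ℝ → ℝ) (x : Euc n) (t : ℝ) : ℝ :=
  -divVF (fun y => unitNormal f y t) x + ⟪X x, unitNormal f x t⟫

/-- `Φ^X_K = v_K - H^X_K`. -/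
def PhiX {n : ℕ} (X : Euc n → Euc n) (f : Euc n × ℝ → ℝ) (x : Euc n) (t : ℝ) : ℝ :=
  normalVel f x t - XMeanCurvature X f x t

/-- A smooth compact barrier on `[a,b]`, given by a defining function `f`. -/
structure SmoothCompactBarrier (n : ℕ) (a b : ℝ) where
  f : Euc n × ℝ → ℝ
  smooth : ContDiff ℝ (⊤ : ℕ∞) f
  grad_ne : ∀ x t, t ∈ Icc a b → f (x, t) = 0 → spatialGrad f x t ≠ 0
  cpt : IsCompact {p : Euc n × ℝ | p.2 ∈ Icc a b ∧ f p ≤ 0}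

/-- The time-`t` region `K(t) = {f(·,t) ≤ 0}` of a barrier. -/
def SmoothCompactBarrier.K {n : ℕ} {a b : ℝ} (B : SmoothCompactBarrier n a b) (t : ℝ) :
    Set (Euc n) := {x | B.f (x, t) ≤ 0}

/-- The time-`t` boundary `∂K(t) = {f(·,t) = 0}` of a barrier. -/
def SmoothCompactBarrier.bdry {n : ℕ} {a b : ℝ} (B : SmoothCompactBarrier n a b) (t : ℝ) :
    Set (Euc n) := {x | B.f (x, t) = 0}

/-- `Z` is a weak `X`-flow generated by `Γ` with starting time `T₀`. -/
structure IsWeakXFlow {n : ℕ} (X : Euc n → Euc n) (T₀ : ℝ) (Γ Z : Set (Euc n × ℝ)) : Prop where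
  closed : IsClosed Z
  sub : Z ⊆ cyl univ T₀
  init : tslice Z T₀ = tslice Γ T₀
  gen : Γ ⊆ Z
  barrier : ∀ (a b : ℝ) (B : SmoothCompactBarrier n a b), T₀ ≤ a → a ≤ b →
    (∀ t ∈ Ico a b, B.K t ∩ tslice Z t = ∅) →
    ∀ p ∈ B.K b ∩ tslice Z b, p ∈ tslice Γ b ∨ (B.f (p, b) = 0 ∧ 0 ≤ PhiX X B.f p b)

/-- `Z` is the biggest `X`-flow generated by `Γ` with starting time `T₀`. -/
def IsBiggestFlow {n : ℕ} (X : Euc n → Euc n) (T₀ : ℝ) (Γ Z : Set (Euc n × ℝ)) : Prop :=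
  IsWeakXFlow X T₀ Γ Z ∧
    ∀ (T₀' : ℝ) (Γ' Z' : Set (Euc n × ℝ)), T₀ ≤ T₀' → IsClosed Γ' →
      Γ' ⊆ Z ∩ cyl univ T₀' → IsWeakXFlow X T₀' Γ' Z' → Z' ⊆ Z

/-- `(ℝ^{n+1}, X)` is tame: `|DX|` is uniformly bounded. -/
def Tame {n : ℕ} (X : Euc n → Euc n) : Prop := ∃ C : ℝ, ∀ x : Euc n, ‖fderiv ℝ X x‖ ≤ C

/-- A closed set that is smooth and strictly `X`-mean-convex. -/
def IsSmoothStrictlyXMeanConvex {n : ℕ} (X : Euc n → Euc n) (U : Set (Euc n)) : Prop :=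
  IsClosed U ∧ ∃ g : Euc n → ℝ, ContDiff ℝ (⊤ : ℕ∞) g ∧ U = {x | g x ≤ 0} ∧
    interior U = {x | g x < 0} ∧ (∀ x, g x = 0 → gradient g x ≠ 0) ∧
    ∀ x, g x = 0 →
      -divVF (fun y => ‖gradient g y‖⁻¹ • gradient g y) x +
          ⟪X x, ‖gradient g x‖⁻¹ • gradient g x⟫ < 0

/-- A closed set with smooth boundary. -/
def IsSmoothSet {n : ℕ} (U : Set (Euc n)) : Prop :=
  IsClosed U ∧ ∃ g : Euc n → ℝ, ContDiff ℝ (⊤ : ℕ∞) g ∧ U = {x | g x ≤ 0} ∧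
    interior U = {x | g x < 0} ∧ ∀ x, g x = 0 → gradient g x ≠ 0

/-- Strict monotonicity in the cylinder `C_{S,T₀}`. -/
def StrictlyMonotoneIn {α : Type*} [TopologicalSpace α] (S : Set α) (T₀ : ℝ)
    (Z : Set (α × ℝ)) : Prop :=
  ∀ t₁ t₂, T₀ ≤ t₁ → t₁ < t₂ → tslice Z t₂ ⊆ interiorIn S (tslice Z t₁)

/-- Ampleness in `U` of a weak `X`-flow starting from `T₀`. -/
def AmpleIn {n : ℕ} (X : Euc n → Euc n) (T₀ : ℝ) (Z : Set (Euc n × ℝ)) (U : Set (Euc n)) : Prop :=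
  IsBiggestFlow X T₀ (Z ∩ frontier (cyl U T₀)) (Z ∩ cyl U T₀)

/-- Ampleness of a weak `X`-flow starting from `T₀`. -/
def Ample {n : ℕ} (X : Euc n → Euc n) (T₀ : ℝ) (Z : Set (Euc n × ℝ)) : Prop :=
  ∀ U : Set (Euc n), IsSmoothStrictlyXMeanConvex X U → IsCompact U → AmpleIn X T₀ Z U

/-- Spacetime `X`-mean-convexity of `Γ ⊆ ∂C_{U,T₀}`, phrased relative to a set `Z` which is
meant to be the biggest `X`-flow generated by `Γ` with starting time `T₀`. -/
def SpacetimeXMeanConvex {n : ℕ} (T₀ : ℝ) (U : Set (Euc n)) (Γ Z : Set (Euc n × ℝ)) : Prop :=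
  StrictlyMonotoneIn (frontier U) T₀ (Γ ∩ cyl (frontier U) T₀) ∧
  (∃ ε > 0, ∀ t, T₀ < t → t < T₀ + ε → tslice Z t ⊆ interiorIn U (tslice Γ T₀)) ∧
  interiorIn (frontier (cyl U T₀)) Γ ∩ (univ ×ˢ Ioi T₀) ⊆ interiorIn (cyl U T₀) Z

lemma interiorIn_subset {α : Type*} [TopologicalSpace α] (S A : Set α) :
    interiorIn S A ⊆ A := by
  rintro x ⟨y, hy, rfl⟩
  exact interior_subset (s := (Subtype.val : S → α) ⁻¹' A) hy

lemma mem_interiorIn {α : Type*} [TopologicalSpace α] {S A : Set α} {x : α} :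
    x ∈ interiorIn S A ↔ x ∈ S ∧ ∃ O : Set α, IsOpen O ∧ x ∈ O ∧ O ∩ S ⊆ A := by
  constructor
  · rintro ⟨y, hy, rfl⟩
    refine ⟨y.2, ?_⟩
    have h := isOpen_interior (s := (Subtype.val : S → α) ⁻¹' A)
    rw [isOpen_induced_iff] at h
    obtain ⟨O, hO, hOeq⟩ := h
    refine ⟨O, hO, ?_, ?_⟩
    · have : y ∈ (Subtype.val : S → α) ⁻¹' O := by rw [hOeq]; exact hy
      exact this
    · rintro z ⟨hzO, hzS⟩
      have hz : (⟨z, hzS⟩ : S) ∈ interior ((Subtype.val : S → α) ⁻¹' A) := by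
        rw [← hOeq]; exact hzO
      exact interior_subset (s := (Subtype.val : S → α) ⁻¹' A) hz
  · rintro ⟨hxS, O, hO, hxO, hsub⟩
    refine ⟨⟨x, hxS⟩,
      interior_maximal ?_ (hO.preimage continuous_subtype_val) hxO, rfl⟩
    intro z hz
    exact hsub ⟨hz, z.2⟩

lemma key_mem_interiorIn_cyl {N : Type*} [TopologicalSpace N] {U : Set N} {T₀ : ℝ}
    {Z : Set (N × ℝ)} (hmono : StrictlyMonotoneIn U T₀ Z)
    {x : N} {s t' : ℝ} (hs : T₀ ≤ s) (hst : s < t') (hx : x ∈ tslice Z t')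
    {r : ℝ} (hr1 : T₀ < r) (hr2 : r < s) :
    (x, r) ∈ interiorIn (cyl U T₀) Z := by
  have h1 := hmono s t' hs hst hx
  rw [mem_interiorIn] at h1
  obtain ⟨hxU, O, hO, hxO, hsub⟩ := h1
  rw [mem_interiorIn]
  refine ⟨⟨hxU, le_of_lt hr1⟩, O ×ˢ Ioo T₀ s, hO.prod isOpen_Ioo,
    ⟨hxO, hr1, hr2⟩, ?_⟩
  rintro ⟨y, ρ⟩ ⟨⟨hyO, hρ1, hρ2⟩, hyU, -⟩
  have hys : y ∈ tslice Z s := hsub ⟨hyO, hyU⟩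
  exact interiorIn_subset U (tslice Z ρ) (hmono ρ s (le_of_lt hρ1) hρ2 hys)

/-- Topological properties of strictly monotone spacetime sets. -/
theorem strictlyMonotone_topology {N : Type*} [TopologicalSpace N]
    (U : Set N) (hU : IsClosed U) (T₀ : ℝ) (Z : Set (N × ℝ))
    (hZc : IsClosed Z) (hZs : Z ⊆ cyl U T₀)
    (hmono : StrictlyMonotoneIn U T₀ Z) :
    (Z ∩ (univ ×ˢ Ioi T₀) = closure (interiorIn (cyl U T₀) Z) ∩ (univ ×ˢ Ioi T₀)) ∧
    ∀ (V : Set N) (Γ : Set (N × ℝ)), IsClosed V → IsClosed Γ → V ⊆ U → Γ ⊆ Z →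
      Γ ⊆ cyl (frontier V) T₀ → StrictlyMonotoneIn (frontier V) T₀ Γ →
      interiorIn (cyl (frontier V) T₀) Γ ∩ (univ ×ˢ Ioi T₀) ⊆ interiorIn (cyl U T₀) Z := by
  constructor
  · apply Set.Subset.antisymm
    · rintro ⟨x, t⟩ ⟨hxZ, -, ht⟩
      have htT : T₀ < t := ht
      refine ⟨?_, trivial, ht⟩
      rw [mem_closure_iff_nhds]
      intro W hW
      rw [mem_nhds_prod_iff] at hW
      obtain ⟨u, hu, v, hv, huv⟩ := hW
      obtain ⟨ε, hε, hball⟩ := Metric.mem_nhds_iff.mp hv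
      set r := max (t - ε / 2) ((T₀ + t) / 2) with hr
      have hrt : r < t := max_lt (by linarith) (by linarith)
      have hrT : T₀ < r := lt_of_lt_of_le (by linarith) (le_max_right _ _)
      have hrb : r ∈ ball t ε := by
        rw [mem_ball, Real.dist_eq, abs_lt]
        have h1 : t - ε / 2 ≤ r := le_max_left _ _
        constructor <;> linarith
      refine ⟨(x, r), huv ⟨mem_of_mem_nhds hu, hball hrb⟩, ?_⟩
      exact key_mem_interiorIn_cyl hmono (s := (r + t) / 2) (by linarith) (by linarith)
        hxZ hrT (by linarith)
    · rintro p ⟨hp, hp2⟩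
      refine ⟨?_, hp2⟩
      have hsub : closure (interiorIn (cyl U T₀) Z) ⊆ Z :=
        (closure_mono (interiorIn_subset (cyl U T₀) Z)).trans hZc.closure_eq.subset
      exact hsub hp
  · intro V Γ hVc hΓc hVU hΓZ hΓcyl hΓmono
    rintro ⟨x, t⟩ ⟨hxt, -, ht⟩
    have htT : T₀ < t := ht
    rw [mem_interiorIn] at hxt
    obtain ⟨hxcyl, W, hW, hxW, hsub⟩ := hxt
    obtain ⟨u, v, hu, hv, hxu, htv, huv⟩ := (isOpen_prod_iff.mp hW) x t hxW
    obtain ⟨ε, hε, hball⟩ := Metric.isOpen_iff.mp hv t htv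
    have hb : t + ε / 2 ∈ ball t ε := by
      rw [mem_ball, Real.dist_eq, show t + ε / 2 - t = ε / 2 by ring,
        abs_of_pos (by linarith)]
      linarith
    have hΓ' : (x, t + ε / 2) ∈ Γ := by
      apply hsub
      refine ⟨huv ⟨hxu, hball hb⟩, ?_⟩
      exact ⟨hxcyl.1, by have : T₀ ≤ t := le_of_lt htT; simp [mem_Ici]; linarith⟩
    have hxZ : x ∈ tslice Z (t + ε / 2) := hΓZ hΓ'
    exact key_mem_interiorIn_cyl hmono (s := t + ε / 4) (by linarith) (by linarith)
      hxZ htT (by linarith)
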